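/- arXiv:2006.06342 — 2 statements merged into one kernel-verified Lean document; each statement's English description precedes it below -/
import Mathlib

section
/- For the N-qubit one-axis twisted state |ψ⟩ = exp(-iθ J_x²/2)|1⟩^{⊗N} (N ≥ 2), the single-spin expectation satisfies ⟨σ_z⟩ = -cos^{N-1}(θ/2), where J_x = (1/2)Σ_k σ_{k,x}. -/
open Matrix Complex Finset

noncomputable section OneAxisTwisting

/-- Pauli x matrix in the basis `{|0⟩, |1⟩}`. -/
def pauliX : Matrix (Fin 2) (Fin 2) ℂ := !![0, 1; 1, 0]

/-- Pauli z matrix in the basis `{|0⟩, |1⟩}`. -/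
def pauliZ : Matrix (Fin 2) (Fin 2) ℂ := !![1, 0; 0, -1]

/-- The single-qubit operator `m` acting on site `k` of `N` qubits (identity elsewhere),
as a matrix on the computational basis indexed by `Fin N → Fin 2`. -/
def siteOp (N : ℕ) (k : Fin N) (m : Matrix (Fin 2) (Fin 2) ℂ) :
    Matrix (Fin N → Fin 2) (Fin N → Fin 2) ℂ :=
  Matrix.of fun s t =>
    m (s k) (t k) * ∏ j ∈ Finset.univ.erase k, (if s j = t j then (1 : ℂ) else 0)

/-- The collective spin operator `J_x = (1/2) Σ_k σ_{k,x}`. -/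
def Jx (N : ℕ) : Matrix (Fin N → Fin 2) (Fin N → Fin 2) ℂ :=
  (1 / 2 : ℂ) • ∑ k : Fin N, siteOp N k pauliX

/-- The all-down state `|1⟩^{⊗N}` as a vector. -/
def allDown (N : ℕ) : (Fin N → Fin 2) → ℂ :=
  fun s => if s = (fun _ => 1) then 1 else 0

/-- The one-axis twisted state `exp(-iθ J_x²/2) |1⟩^{⊗N}`. -/
def oneAxisTwisted (N : ℕ) (θ : ℝ) : (Fin N → Fin 2) → ℂ :=
  (NormedSpace.exp ((-(θ / 2 : ℂ) * Complex.I) • (Jx N * Jx N))).mulVec (allDown N)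

/-- Expectation value `⟨ψ|O|ψ⟩` in the one-axis twisted state. -/
def expVal (N : ℕ) (θ : ℝ) (O : Matrix (Fin N → Fin 2) (Fin N → Fin 2) ℂ) : ℂ :=
  star (oneAxisTwisted N θ) ⬝ᵥ O.mulVec (oneAxisTwisted N θ)

/-!
Conjugation by `σ_{1,z}` flips the sign of `σ_{1,x}` only, so `σ_{1,z} J_x σ_{1,z} = J_x - σ_{1,x}`.
With `U = exp(-iθ J_x²/2)` and all `σ_{k,x}` commuting, this gives `U† σ_{1,z} U =
exp(iθ/2 (J_x² - (J_x - σ_{1,x})²)) σ_{1,z} = ∏_{k ≠ 1} exp(iθ/2 σ_{k,x} σ_{1,x}) σ_{1,z}`,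
and each factor is `cos(θ/2) + i sin(θ/2) σ_{k,x} σ_{1,x}` because `(σ_{k,x} σ_{1,x})² = 1`.
The all-down state is a `-1`-eigenvector of `σ_{1,z}`, and every term of the expanded product
that contains some `σ_{k,x} σ_{1,x}` flips spin `k` of it, so only `cos^{N-1}(θ/2)` survives.
-/

theorem exp_mul_I_smul_of_mul_self_eq_one {A : Type*} [NormedRing A] [NormedAlgebra ℂ A]
    [CompleteSpace A] {P : A} (hP : P * P = 1) (z : ℂ) :
    NormedSpace.exp ((z * I) • P) = cos z • (1 : A) + (sin z * I) • P := by
  have hP2 : ∀ n : ℕ, P ^ (2 * n) = 1 := fun n => by rw [pow_mul, sq, hP, one_pow]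
  refine (NormedSpace.exp_series_hasSum_exp' (𝕂 := ℂ) ((z * I) • P)).unique ?_
  refine HasSum.even_add_odd ?_ ?_
  · convert (Complex.hasSum_cos' z).smul_const (1 : A) using 2 with n
    rw [smul_pow, hP2, smul_smul, div_eq_inv_mul]
  · have hsin := ((Complex.hasSum_sin' z).mul_right I).smul_const P
    convert hsin using 2 with n
    rw [smul_pow, pow_succ P, hP2, one_mul, smul_smul, div_mul_cancel₀ _ I_ne_zero,
      div_eq_inv_mul]

theorem Matrix.exp_mul_I_smul_of_mul_self_eq_one {m : Type*} [Fintype m] [DecidableEq m]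
    {P : Matrix m m ℂ} (hP : P * P = 1) (z : ℂ) :
    NormedSpace.exp ((z * I) • P) = cos z • (1 : Matrix m m ℂ) + (sin z * I) • P :=
  open scoped Norms.Operator in _root_.exp_mul_I_smul_of_mul_self_eq_one hP z

namespace Matrix

def kronPi {ι κ R : Type*} [Fintype ι] [CommSemiring R] (M : ι → Matrix κ κ R) :
    Matrix (ι → κ) (ι → κ) R :=
  of fun s t => ∏ i, M i (s i) (t i)

variable {ι κ R : Type*} [Fintype ι] [CommSemiring R]

theorem kronPi_mul [DecidableEq ι] [Fintype κ] (M M' : ι → Matrix κ κ R) :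
    kronPi M * kronPi M' = kronPi (M * M') := by
  ext s t
  simp only [kronPi, mul_apply, of_apply, Pi.mul_apply]
  rw [Fintype.prod_sum fun i b => M i (s i) b * M' i b (t i)]
  exact sum_congr rfl fun u _ => prod_mul_distrib.symm

theorem kronPi_one [DecidableEq ι] [DecidableEq κ] : kronPi (1 : ι → Matrix κ κ R) = 1 := by
  ext s t
  simp [kronPi, one_apply, prod_boole, funext_iff]

theorem conjTranspose_kronPi [StarRing R] (M : ι → Matrix κ κ R) :
    (kronPi M)ᴴ = kronPi fun i => (M i)ᴴ := by
  ext s t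
  simp [kronPi, star_prod]

theorem commute_kronPi [DecidableEq ι] [Fintype κ] {M M' : ι → Matrix κ κ R}
    (h : ∀ i, Commute (M i) (M' i)) :
    Commute (kronPi M) (kronPi M') := by
  simp only [Commute, SemiconjBy, kronPi_mul]
  exact congrArg kronPi (funext fun i => h i)

end Matrix

theorem pauliX_mul_self : pauliX * pauliX = 1 := by
  ext a b; fin_cases a <;> fin_cases b <;> simp [pauliX, mul_apply]

theorem pauliZ_mul_pauliX : pauliZ * pauliX = -(pauliX * pauliZ) := by
  ext a b; fin_cases a <;> fin_cases b <;> simp [pauliX, pauliZ, mul_apply]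

theorem conjTranspose_pauliX : pauliXᴴ = pauliX := by
  ext a b; fin_cases a <;> fin_cases b <;> simp [pauliX]

theorem pauliX_apply (a b : Fin 2) : pauliX a b = if b = a.rev then 1 else 0 := by
  fin_cases a <;> fin_cases b <;> simp [pauliX]

section Spins

variable {N : ℕ}

theorem siteOp_eq_kronPi (k : Fin N) (m : Matrix (Fin 2) (Fin 2) ℂ) :
    siteOp N k m = kronPi (Function.update 1 k m) := by
  ext s t
  rw [siteOp, kronPi, of_apply, of_apply, ← mul_prod_erase univ _ (mem_univ k),
    Function.update_self]
  congr 1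
  refine prod_congr rfl fun j hj => ?_
  rw [Function.update_of_ne (ne_of_mem_erase hj), Pi.one_apply, one_apply]

theorem siteOp_mul_siteOp (k : Fin N) (m m' : Matrix (Fin 2) (Fin 2) ℂ) :
    siteOp N k m * siteOp N k m' = siteOp N k (m * m') := by
  rw [siteOp_eq_kronPi, siteOp_eq_kronPi, siteOp_eq_kronPi, kronPi_mul, ← Function.update_mul,
    one_mul]

theorem siteOp_one (k : Fin N) : siteOp N k 1 = 1 := by
  rw [siteOp_eq_kronPi, Function.update_one, kronPi_one]

theorem siteOp_neg (k : Fin N) (m : Matrix (Fin 2) (Fin 2) ℂ) :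
    siteOp N k (-m) = -siteOp N k m := by
  ext s t
  simp [siteOp]

theorem conjTranspose_siteOp (k : Fin N) (m : Matrix (Fin 2) (Fin 2) ℂ) :
    (siteOp N k m)ᴴ = siteOp N k mᴴ := by
  rw [siteOp_eq_kronPi, siteOp_eq_kronPi, conjTranspose_kronPi]
  congr 1
  ext1 j
  rcases eq_or_ne j k with rfl | hj
  · simp only [Function.update_self]
  · simp only [Function.update_of_ne hj, Pi.one_apply, conjTranspose_one]

theorem commute_siteOp {k l : Fin N} (hkl : k ≠ l) (m m' : Matrix (Fin 2) (Fin 2) ℂ) :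
    Commute (siteOp N k m) (siteOp N l m') := by
  rw [siteOp_eq_kronPi, siteOp_eq_kronPi]
  refine commute_kronPi fun j => ?_
  rcases eq_or_ne j k with rfl | hjk
  · simp only [Function.update_self, Function.update_of_ne hkl, Pi.one_apply]
    exact Commute.one_right m
  · simp only [Function.update_of_ne hjk, Pi.one_apply]
    exact Commute.one_left _

theorem siteOp_pauliX_mul_self (k : Fin N) : siteOp N k pauliX * siteOp N k pauliX = 1 := by
  rw [siteOp_mul_siteOp, pauliX_mul_self, siteOp_one]

theorem commute_siteOp_pauliX (j k : Fin N) :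
    Commute (siteOp N j pauliX) (siteOp N k pauliX) := by
  rcases eq_or_ne j k with rfl | hjk
  · exact Commute.refl _
  · exact commute_siteOp hjk _ _

theorem commute_siteOp_pauliX_mul_siteOp_pauliX (i j k l : Fin N) :
    Commute (siteOp N i pauliX * siteOp N j pauliX) (siteOp N k pauliX * siteOp N l pauliX) :=
  ((commute_siteOp_pauliX i k).mul_right (commute_siteOp_pauliX i l)).mul_left
    ((commute_siteOp_pauliX j k).mul_right (commute_siteOp_pauliX j l))

theorem siteOp_pauliZ_mul_siteOp_pauliX (k : Fin N) :
    siteOp N k pauliZ * siteOp N k pauliX = -(siteOp N k pauliX * siteOp N k pauliZ) := by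
  rw [siteOp_mul_siteOp, siteOp_mul_siteOp, pauliZ_mul_pauliX, siteOp_neg]

theorem siteOp_pauliX_apply (k : Fin N) (s t : Fin N → Fin 2) :
    siteOp N k pauliX s t = if t = Function.update s k (s k).rev then 1 else 0 := by
  have hfactor : ∀ j,
      Function.update (1 : Fin N → Matrix (Fin 2) (Fin 2) ℂ) k pauliX j (s j) (t j)
        = if t j = Function.update s k (s k).rev j then 1 else 0 := by
    intro j
    rcases eq_or_ne j k with rfl | hjk
    · simp only [Function.update_self, pauliX_apply]
    · simp only [Function.update_of_ne hjk, Pi.one_apply, one_apply, eq_comm]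
  simp only [siteOp_eq_kronPi, kronPi, of_apply, hfactor, prod_boole, mem_univ, true_implies,
    funext_iff]

theorem siteOp_pauliX_mulVec_apply (k : Fin N) (v : (Fin N → Fin 2) → ℂ)
    (t : Fin N → Fin 2) :
    (siteOp N k pauliX *ᵥ v) t = v (Function.update t k (t k).rev) := by
  simp [mulVec, dotProduct, siteOp_pauliX_apply]

theorem mulVec_allDown_apply (M : Matrix (Fin N → Fin 2) (Fin N → Fin 2) ℂ)
    (s : Fin N → Fin 2) :
    (M *ᵥ allDown N) s = M s fun _ => 1 := by
  simp [allDown, mulVec, dotProduct]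

theorem siteOp_pauliZ_mulVec_allDown (k : Fin N) :
    siteOp N k pauliZ *ᵥ allDown N = -allDown N := by
  ext s
  have hfactor : ∀ j,
      Function.update (1 : Fin N → Matrix (Fin 2) (Fin 2) ℂ) k pauliZ j (s j) 1
        = (if j = k then -1 else 1) * if s j = 1 then 1 else 0 := by
    intro j
    rcases eq_or_ne j k with rfl | hjk
    · simp only [Function.update_self, if_true]
      generalize s j = a
      fin_cases a <;> simp [pauliZ]
    · simp [hjk, one_apply]
  rw [mulVec_allDown_apply, siteOp_eq_kronPi, kronPi, of_apply]
  simp only [hfactor, prod_mul_distrib, prod_ite_eq', mem_univ, if_true, prod_boole,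
    true_implies, neg_one_mul, Pi.neg_apply, allDown, funext_iff]

theorem star_allDown_dotProduct (v : (Fin N → Fin 2) → ℂ) :
    star (allDown N) ⬝ᵥ v = v fun _ => 1 := by
  simp [allDown, dotProduct, apply_ite star]

theorem Jx_isHermitian : (Jx N).IsHermitian := by
  simp only [IsHermitian, Jx, conjTranspose_smul, conjTranspose_sum, conjTranspose_siteOp,
    conjTranspose_pauliX]
  norm_num

theorem commute_Jx_siteOp_pauliX (k : Fin N) : Commute (Jx N) (siteOp N k pauliX) :=
  (Commute.sum_left _ _ _ fun j _ => commute_siteOp_pauliX j k).smul_left _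

theorem semiconjBy_siteOp_pauliZ_Jx (k : Fin N) :
    SemiconjBy (siteOp N k pauliZ) (Jx N) (Jx N - siteOp N k pauliX) := by
  have hcomm : ∀ j ∈ univ.erase k, siteOp N k pauliZ * siteOp N j pauliX
      = siteOp N j pauliX * siteOp N k pauliZ := fun j hj =>
    (commute_siteOp (ne_of_mem_erase hj).symm _ _).eq
  unfold SemiconjBy Jx
  rw [mul_smul_comm, mul_sum, sub_mul, smul_mul_assoc, sum_mul,
    ← add_sum_erase _ _ (mem_univ k),
    ← add_sum_erase _ (fun j => siteOp N j pauliX * _) (mem_univ k), sum_congr rfl hcomm,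
    siteOp_pauliZ_mul_siteOp_pauliX]
  module

theorem Jx_mul_Jx_sub (k : Fin N) :
    Jx N * Jx N - (Jx N - siteOp N k pauliX) * (Jx N - siteOp N k pauliX)
      = ∑ j ∈ univ.erase k, siteOp N j pauliX * siteOp N k pauliX := by
  have hJX : Jx N * siteOp N k pauliX
      = (1 / 2 : ℂ) • (1 + ∑ j ∈ univ.erase k, siteOp N j pauliX * siteOp N k pauliX) := by
    rw [Jx, smul_mul_assoc, sum_mul, ← add_sum_erase _ _ (mem_univ k), siteOp_pauliX_mul_self]
  rw [sub_mul, mul_sub, mul_sub, siteOp_pauliX_mul_self, ← (commute_Jx_siteOp_pauliX k).eq, hJX]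
  module

def twist (N : ℕ) (θ : ℝ) : Matrix (Fin N → Fin 2) (Fin N → Fin 2) ℂ :=
  NormedSpace.exp ((-(θ / 2 : ℂ) * I) • (Jx N * Jx N))

theorem conjTranspose_twist (θ : ℝ) :
    (twist N θ)ᴴ = NormedSpace.exp (((θ / 2 : ℂ) * I) • (Jx N * Jx N)) := by
  rw [twist, ← exp_conjTranspose, conjTranspose_smul, conjTranspose_mul, Jx_isHermitian.eq]
  congr 2
  simp

theorem conjTranspose_twist_mul_siteOp_pauliZ_mul_twist (θ : ℝ) (k : Fin N) :
    (twist N θ)ᴴ * siteOp N k pauliZ * twist N θ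
      = NormedSpace.exp (((θ / 2 : ℂ) * I) •
          ∑ j ∈ univ.erase k, siteOp N j pauliX * siteOp N k pauliX) * siteOp N k pauliZ := by
  set a : ℂ := (θ / 2 : ℂ) * I
  set J' := Jx N - siteOp N k pauliX
  have hZ : SemiconjBy (siteOp N k pauliZ) ((-a) • (Jx N * Jx N)) ((-a) • (J' * J')) :=
    ((semiconjBy_siteOp_pauliZ_Jx k).mul_right (semiconjBy_siteOp_pauliZ_Jx k)).smul_right _
  have hJJ' : Commute (Jx N) J' := (Commute.refl _).sub_right (commute_Jx_siteOp_pauliX k)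
  have hcomm : Commute (a • (Jx N * Jx N)) ((-a) • (J' * J')) :=
    ((hJJ'.mul_left hJJ').mul_right (hJJ'.mul_left hJJ')).smul_left _ |>.smul_right _
  have hZexp : siteOp N k pauliZ * NormedSpace.exp ((-a) • (Jx N * Jx N))
      = NormedSpace.exp ((-a) • (J' * J')) * siteOp N k pauliZ := by
    open scoped Norms.Operator in exact hZ.exp_right
  rw [conjTranspose_twist, mul_assoc, twist, neg_mul, hZexp, ← mul_assoc,
    ← Matrix.exp_add_of_commute _ _ hcomm, ← Jx_mul_Jx_sub, smul_sub, neg_smul, sub_eq_add_neg]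

theorem exp_sum_pauliX_mul_mulVec_allDown_apply (k : Fin N) (z : ℂ) {s : Finset (Fin N)}
    (hk : k ∉ s) {t : Fin N → Fin 2} (ht : ∀ j ∈ s, t j = 1) :
    (NormedSpace.exp ((z * I) • ∑ j ∈ s, siteOp N j pauliX * siteOp N k pauliX)
        *ᵥ allDown N) t = if t = (fun _ => 1) then cos z ^ s.card else 0 := by
  -- `ht` is the invariant that carries the induction: flipping spins `i` and `k` of such a `t`
  -- leaves it down on `s` but never all-down, so the flipped term vanishes.
  induction s using Finset.induction_on generalizing t with
  | empty => simp [allDown]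
  | insert i s hi ih =>
    obtain ⟨hik, hks⟩ : i ≠ k ∧ k ∉ s := by simpa [eq_comm] using hk
    have hPP : (siteOp N i pauliX * siteOp N k pauliX) * (siteOp N i pauliX * siteOp N k pauliX)
        = 1 := by
      rw [(commute_siteOp_pauliX k i).mul_mul_mul_comm, siteOp_pauliX_mul_self,
        siteOp_pauliX_mul_self, one_mul]
    have hcomm : Commute ((z * I) • (siteOp N i pauliX * siteOp N k pauliX))
        ((z * I) • ∑ j ∈ s, siteOp N j pauliX * siteOp N k pauliX) :=
      ((Commute.sum_right _ _ _ fun j _ =>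
        commute_siteOp_pauliX_mul_siteOp_pauliX i k j k).smul_left _).smul_right _
    set t' := Function.update (Function.update t i (t i).rev) k
      ((Function.update t i (t i).rev) k).rev with ht'_def
    have ht' : ∀ j ∈ s, t' j = 1 := fun j hj => by
      rw [ht'_def, Function.update_of_ne (ne_of_mem_of_not_mem hj hks),
        Function.update_of_ne (ne_of_mem_of_not_mem hj hi)]
      exact ht j (mem_insert_of_mem hj)
    have ht'_ne : t' ≠ fun _ => 1 := fun h => by
      have := congrFun h i
      rw [ht'_def, Function.update_of_ne hik, Function.update_self,
        ht i (mem_insert_self i s)] at this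
      exact absurd this (by decide)
    rw [sum_insert hi, smul_add, Matrix.exp_add_of_commute _ _ hcomm,
      Matrix.exp_mul_I_smul_of_mul_self_eq_one hPP, ← mulVec_mulVec]
    simp only [add_mulVec, smul_mulVec, one_mulVec, ← mulVec_mulVec, Pi.add_apply,
      Pi.smul_apply, siteOp_pauliX_mulVec_apply, smul_eq_mul]
    rw [ih hks fun j hj => ht j (mem_insert_of_mem hj), ih hks ht', if_neg ht'_ne,
      card_insert_of_notMem hi]
    split_ifs <;> ring

theorem expVal_eq (θ : ℝ) (O : Matrix (Fin N → Fin 2) (Fin N → Fin 2) ℂ) :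
    expVal N θ O = (((twist N θ)ᴴ * O * twist N θ) *ᵥ allDown N) fun _ => 1 := by
  rw [expVal, oneAxisTwisted, ← twist, star_mulVec, ← dotProduct_mulVec, mulVec_mulVec,
    mulVec_mulVec, star_allDown_dotProduct]

end Spins

/-- For the one-axis twisted state on `N ≥ 2` qubits,
`⟨σ_z⟩ = -cos^{N-1}(θ/2)`. -/
theorem oneAxisTwisted_sigma_z (N : ℕ) (hN : 2 ≤ N) (θ : ℝ) :
    expVal N θ (siteOp N ⟨0, by omega⟩ pauliZ) = -((Real.cos (θ / 2) : ℂ)) ^ (N - 1) := by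
  rw [expVal_eq, conjTranspose_twist_mul_siteOp_pauliZ_mul_twist, ← mulVec_mulVec,
    siteOp_pauliZ_mulVec_allDown, mulVec_neg, Pi.neg_apply,
    exp_sum_pauliX_mul_mulVec_allDown_apply _ _ (notMem_erase _ univ) fun _ _ => rfl, if_pos rfl,
    card_erase_of_mem (mem_univ _), card_univ, Fintype.card_fin, ofReal_cos, ofReal_div,
    ofReal_ofNat]

end OneAxisTwisting
end

section
/- For the N-qubit one-axis twisted state (N ≥ 2), the quantities u = ⟨σ_{1-}σ_{2-}⟩ and y = ⟨σ_{1+}σ_{2-}⟩ satisfy |u| ≥ y ≥ 0; explicitly, |u|² - y² = (1/4) sin²(θ/2) cos^{2(N-2)}(θ/2) ≥ 0. -/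
/-! The correlator `u` has real part `-y` and imaginary part `-(1/2) sin(θ/2) cos^{N-2}(θ/2)`.
Hence `‖u‖² - y² = (Im u)²`, `y ≤ |Re u| ≤ ‖u‖`, and `y ≥ 0` because `|cos θ| ≤ 1`. -/

lemma pow_le_one_of_abs_le_one {R : Type*} [Ring R] [LinearOrder R] [IsStrictOrderedRing R]
    {a : R} (ha : |a| ≤ 1) (n : ℕ) : a ^ n ≤ 1 :=
  calc a ^ n ≤ |a ^ n| := le_abs_self _
    _ = |a| ^ n := abs_pow a n
    _ ≤ 1 := pow_le_one₀ (abs_nonneg a) ha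

theorem oneAxisTwisted_u_ge_y_general (N : ℕ) (θ : ℝ) (y : ℝ) (u : ℂ)
    (hy : y = (1 - Real.cos θ ^ (N - 2)) / 8)
    (hu : u = -((1 - (Real.cos θ : ℂ) ^ (N - 2)) / 8) -
      (Complex.I / 2) * (Real.sin (θ / 2) : ℂ) * ((Real.cos (θ / 2) : ℂ)) ^ (N - 2)) :
    ‖u‖ ^ 2 - y ^ 2 =
        (1 / 4) * Real.sin (θ / 2) ^ 2 * Real.cos (θ / 2) ^ (2 * (N - 2)) ∧
      y ≤ ‖u‖ ∧ 0 ≤ y := by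
  set b : ℝ := -(Real.sin (θ / 2) / 2 * Real.cos (θ / 2) ^ (N - 2)) with hb
  have hu' : u = (-y : ℝ) + (b : ℝ) * Complex.I := by
    rw [hu, hy, hb]; push_cast; ring
  have hre : u.re = -y := by simp [hu']
  have him : u.im = b := by simp [hu']
  refine ⟨?_, ?_, ?_⟩
  · rw [← neg_sq y, ← hre, Complex.sq_norm_sub_sq_re, him, pow_mul]
    ring
  · calc y ≤ |u.re| := by rw [hre, abs_neg]; exact le_abs_self y
      _ ≤ ‖u‖ := Complex.abs_re_le_norm u
  · have hcos := pow_le_one_of_abs_le_one (Real.abs_cos_le_one θ) (N - 2)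
    rw [hy]; linarith

/-- For the one-axis twisted state (`N ≥ 2`, `θ ∈ [0, π]`), with the
closed-form correlators `y = ⟨σ_{1+}σ_{2-}⟩ = (1 - cos^{N-2}θ)/8` and
`u = ⟨σ_{1-}σ_{2-}⟩ = -(1 - cos^{N-2}θ)/8 - (i/2)sin(θ/2)cos^{N-2}(θ/2)`, one has
`|u| ≥ y ≥ 0` and `|u|² - y² = (1/4)sin²(θ/2)cos^{2(N-2)}(θ/2)`. -/
theorem oneAxisTwisted_u_ge_y (N : ℕ) (hN : 2 ≤ N) (θ : ℝ)
    (hθ0 : 0 ≤ θ) (hθπ : θ ≤ Real.pi) (y : ℝ) (u : ℂ)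
    (hy : y = (1 - Real.cos θ ^ (N - 2)) / 8)
    (hu : u = -((1 - (Real.cos θ : ℂ) ^ (N - 2)) / 8) -
      (Complex.I / 2) * (Real.sin (θ / 2) : ℂ) * ((Real.cos (θ / 2) : ℂ)) ^ (N - 2)) :
    ‖u‖ ^ 2 - y ^ 2 =
        (1 / 4) * Real.sin (θ / 2) ^ 2 * Real.cos (θ / 2) ^ (2 * (N - 2)) ∧
      y ≤ ‖u‖ ∧ 0 ≤ y :=
  oneAxisTwisted_u_ge_y_general N θ y u hy hu
end
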